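/- Let (X,d) be a bounded metric space with X = X₁ ∪ X₂ ∪ {x₀}, where X₁, X₂, {x₀} are pairwise disjoint and {x₀} = closure(X₁) ∩ closure(X₂). Then X satisfies property C₀ (i.e., d(x,x₀) ≤ c[d(x,X₁) + d(x,X₂)] for some constant c and every x ∈ X) if and only if there exists a constant c̄ > 0 such that for every i ≠ j and every x ∈ X_i one has B(x, c̄·d(x,x₀)) ∩ X_j = ∅. -/

import Mathlib

/-! On `X₁` the distance to `X₁` vanishes, so property `C₀` at `x ∈ X₁` reads
`d(x, x₀) ≤ c · d(x, X₂)`, which says exactly that `B(x, d(x, x₀) / c)` misses `X₂`;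
symmetrically on `X₂`, and at `x₀` there is nothing to prove. -/

open Metric

namespace Metric

variable {α : Type*} [PseudoMetricSpace α] {x : α} {s : Set α}

theorem ball_inter_eq_empty_iff_le_infDist {r : ℝ} (hs : s.Nonempty) :
    ball x r ∩ s = ∅ ↔ r ≤ infDist x s := by
  rw [le_infDist hs, ← Set.disjoint_iff_inter_eq_empty, Set.disjoint_left]
  exact forall_congr' fun y => by rw [mem_ball', ← not_le]; tauto

theorem ball_inv_mul_inter_eq_empty_iff {c r : ℝ} (hc : 0 < c) (hs : s.Nonempty) :
    ball x (c⁻¹ * r) ∩ s = ∅ ↔ r ≤ c * infDist x s := by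
  rw [ball_inter_eq_empty_iff_le_infDist hs, inv_mul_le_iff₀ hc]

end Metric

theorem propertyC0_iff_ball_separation_general {X : Type*} [MetricSpace X]
    (X₁ X₂ : Set X) (x₀ : X)
    (hcover : X₁ ∪ X₂ ∪ {x₀} = Set.univ)
    (hclos : closure X₁ ∩ closure X₂ = {x₀}) :
    (∃ c : ℝ, ∀ x : X, dist x x₀ ≤ c * (infDist x X₁ + infDist x X₂)) ↔
    (∃ cb : ℝ, 0 < cb ∧
      (∀ x ∈ X₁, ball x (cb * dist x x₀) ∩ X₂ = ∅) ∧
      (∀ x ∈ X₂, ball x (cb * dist x x₀) ∩ X₁ = ∅)) := by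
  have hx₀ : x₀ ∈ closure X₁ ∩ closure X₂ := hclos ▸ rfl
  have hne₁ : X₁.Nonempty := closure_nonempty_iff.mp ⟨x₀, hx₀.1⟩
  have hne₂ : X₂.Nonempty := closure_nonempty_iff.mp ⟨x₀, hx₀.2⟩
  constructor
  · rintro ⟨c, hc⟩
    -- Enlarging the constant keeps property C₀ and makes it positive.
    have hC : 0 < max c 1 := lt_max_of_lt_right one_pos
    have hbound (x : X) : dist x x₀ ≤ max c 1 * (infDist x X₁ + infDist x X₂) :=
      (hc x).trans <| mul_le_mul_of_nonneg_right (le_max_left _ _) <|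
        add_nonneg infDist_nonneg infDist_nonneg
    refine ⟨(max c 1)⁻¹, inv_pos.mpr hC, fun x hx => ?_, fun x hx => ?_⟩
    · rw [ball_inv_mul_inter_eq_empty_iff hC hne₂]
      simpa [infDist_zero_of_mem hx] using hbound x
    · rw [ball_inv_mul_inter_eq_empty_iff hC hne₁]
      simpa [infDist_zero_of_mem hx] using hbound x
  · rintro ⟨cb, hcb, h₁₂, h₂₁⟩
    refine ⟨cb⁻¹, fun x => ?_⟩
    have hsep {s : Set X} (hs : s.Nonempty) :
        ball x (cb * dist x x₀) ∩ s = ∅ ↔ dist x x₀ ≤ cb⁻¹ * infDist x s := by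
      rw [← ball_inv_mul_inter_eq_empty_iff (inv_pos.mpr hcb) hs, inv_inv]
    rcases (hcover.symm ▸ Set.mem_univ x : x ∈ X₁ ∪ X₂ ∪ {x₀}) with (hx | hx) | rfl
    · rw [infDist_zero_of_mem hx, zero_add, ← hsep hne₂]
      exact h₁₂ x hx
    · rw [infDist_zero_of_mem hx, add_zero, ← hsep hne₁]
      exact h₂₁ x hx
    · rw [dist_self]
      exact mul_nonneg (inv_nonneg.mpr hcb.le) (add_nonneg infDist_nonneg infDist_nonneg)

/-- given `X = X₁ ∪ X₂ ∪ {x₀}` with `{x₀} = closure X₁ ∩ closure X₂`, the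
distance condition of property `C₀` holds iff there is `c̄ > 0` such that for `i ≠ j`,
`B(x, c̄ d(x,x₀)) ∩ X_j = ∅` for every `x ∈ X_i`. -/
theorem propertyC0_iff_ball_separation {X : Type*} [MetricSpace X]
    (X₁ X₂ : Set X) (x₀ : X)
    (hcover : X₁ ∪ X₂ ∪ {x₀} = Set.univ)
    (hdisj : Disjoint X₁ X₂) (hx₀₁ : x₀ ∉ X₁) (hx₀₂ : x₀ ∉ X₂)
    (hbdd : Bornology.IsBounded (Set.univ : Set X))
    (hclos : closure X₁ ∩ closure X₂ = {x₀}) :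
    (∃ c : ℝ, ∀ x : X, dist x x₀ ≤ c * (infDist x X₁ + infDist x X₂)) ↔
    (∃ cb : ℝ, 0 < cb ∧
      (∀ x ∈ X₁, ball x (cb * dist x x₀) ∩ X₂ = ∅) ∧
      (∀ x ∈ X₂, ball x (cb * dist x x₀) ∩ X₁ = ∅)) :=
  propertyC0_iff_ball_separation_general X₁ X₂ x₀ hcover hclos
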